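/- Let $X : \mathbb{R} \times \Omega \to E$ be a continuous process over a measurable metric dynamical system, satisfying the cocycle property $X_{s,s+t}(\omega) = X_t(\theta_s \omega)$ for all $s,t$, and with continuously differentiable sample paths. Then for any $n \ge 1$ the $n$-fold iterated Riemann–Stieltjes integrals satisfy $\int_{\Delta^n_{s, s+t}} dX(\omega) \otimes \cdots \otimes dX(\omega) = \int_{\Delta^n_{0, t}} dX(\theta_s \omega) \otimes \cdots \otimes dX(\theta_s \omega)$ in $E^{\otimes n}$; i.e., the canonical truncated-signature lift of $X$ is again a cocycle with respect to the group operation on $T_1^N(E)$. -/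
import Mathlib


namespace Stmt15

/-- Component `κ` of the `n`-fold iterated Riemann–Stieltjes integral
`∫_{Δⁿ_{s,t}} dx ⊗ ⋯ ⊗ dx ∈ (ℝ^d)^{⊗ n}` of a `C¹` path `x : ℝ → ℝ^d`, defined by the
recursion `I⁰ = 1`, `Iⁿ⁺¹_κ(s,t) = ∫_s^t Iⁿ_{κ|}(s,u) · (x^{κ_{n}})'(u) du`. -/
noncomputable def itInt {d : ℕ} (x : ℝ → Fin d → ℝ) :
    (n : ℕ) → ((Fin n → Fin d) → ℝ → ℝ → ℝ)
  | 0 => fun _ _ _ => 1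
  | (n + 1) => fun κ s t =>
      ∫ u in s..t, itInt x n (fun i => κ i.castSucc) s u * deriv (fun r => x r (κ (Fin.last n))) u

/-- Translation invariance of the iterated integral, up to an additive constant on the path. -/
lemma itInt_shift {d : ℕ} (x : ℝ → Fin d → ℝ) (c : Fin d → ℝ) :
    ∀ (n : ℕ) (κ : Fin n → Fin d) (s t : ℝ),
      itInt x n κ s (s + t) = itInt (fun r i => x (s + r) i - c i) n κ 0 t := by
  intro n
  induction n with
  | zero => intro κ s t; rfl
  | succ n ih =>
    intro κ s t
    show (∫ u in s..(s + t), itInt x n (fun i => κ i.castSucc) s u *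
            deriv (fun r => x r (κ (Fin.last n))) u)
        = ∫ u in (0:ℝ)..t, itInt (fun r i => x (s + r) i - c i) n (fun i => κ i.castSucc) 0 u *
            deriv (fun r => x (s + r) (κ (Fin.last n)) - c (κ (Fin.last n))) u
    have hderiv : ∀ u : ℝ,
        deriv (fun r => x (s + r) (κ (Fin.last n)) - c (κ (Fin.last n))) u
          = deriv (fun r => x r (κ (Fin.last n))) (s + u) := by
      intro u
      rw [deriv_sub_const]
      exact deriv_comp_const_add (fun q => x q (κ (Fin.last n))) s u
    have hint : ∀ u : ℝ,
        itInt (fun r i => x (s + r) i - c i) n (fun i => κ i.castSucc) 0 u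
          = itInt x n (fun i => κ i.castSucc) s (s + u) := fun u => (ih _ s u).symm
    calc (∫ u in s..(s + t), itInt x n (fun i => κ i.castSucc) s u *
            deriv (fun r => x r (κ (Fin.last n))) u)
        = ∫ u in (s + 0)..(s + t), itInt x n (fun i => κ i.castSucc) s u *
            deriv (fun r => x r (κ (Fin.last n))) u := by rw [add_zero]
      _ = ∫ u in (0:ℝ)..t, itInt x n (fun i => κ i.castSucc) s (s + u) *
            deriv (fun r => x r (κ (Fin.last n))) (s + u) := by
            rw [intervalIntegral.integral_comp_add_left
              (fun u => itInt x n (fun i => κ i.castSucc) s u *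
                deriv (fun r => x r (κ (Fin.last n))) u) s]
      _ = _ := by
            apply intervalIntegral.integral_congr
            intro u _
            dsimp only
            rw [hint u, hderiv u]

/-- for a process `X` with `C¹` sample paths satisfying the cocycle property
`X_{s,s+t}(ω) = X_t(θ_s ω)`, the iterated integrals coincide:
`∫_{Δⁿ_{s,s+t}} dX(ω) ⊗ ⋯ ⊗ dX(ω) = ∫_{Δⁿ_{0,t}} dX(θ_s ω) ⊗ ⋯ ⊗ dX(θ_s ω)`,
i.e. the canonical truncated-signature lift of `X` is again a cocycle. -/
theorem stmt_15 {Ω : Type*} {d : ℕ}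
    (θ : ℝ → Ω → Ω)
    (hθ0 : θ 0 = id)
    (hθadd : ∀ s t : ℝ, θ (s + t) = θ s ∘ θ t)
    (X : ℝ → Ω → Fin d → ℝ)
    (hXsmooth : ∀ ω, ContDiff ℝ 1 fun t => X t ω)
    (hXcoc : ∀ (s t : ℝ) (ω : Ω), X (s + t) ω - X s ω = X t (θ s ω)) :
    ∀ (n : ℕ) (κ : Fin n → Fin d) (s t : ℝ) (ω : Ω),
      itInt (fun r => X r ω) n κ s (s + t) = itInt (fun r => X r (θ s ω)) n κ 0 t := by
  intro n κ s t ω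
  have h := itInt_shift (fun r => X r ω) (X s ω) n κ s t
  have hfun : (fun r i => X (s + r) ω i - X s ω i) = fun r => X r (θ s ω) := by
    funext r i
    exact congrFun (hXcoc s r ω) i
  rwa [hfun] at h

end Stmt15
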